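/- arXiv:2403.19901 — 8 statements merged into one kernel-verified Lean document; each statement's English description precedes it below -/
import Mathlib

section
/- Let R1, R2, G, Gsc > 0 be real parameters and let I_L > 0. Then there exist no real numbers x1*, x2*, x3*, x4*, x5*, u1*, u2* with x2* > 0 and x4* > 0 satisfying the equilibrium equations 0 = -R1·x1* + x5* - x2*·u1*, 0 = -G·x2* + x1*·u1* - x3*·u2*, 0 = -R2·x3* - x4* + x2*·u2*, 0 = x3* - I_L, and 0 = -Gsc·x5* - x1*. In particular, the system has no equilibrium point at which the voltages x2 and x4 are regulated to positive setpoints. -/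
/-!
Multiply each equilibrium equation by its own state variable and add: the switching terms and
the couplings `x1·x5`, `x3·x4` cancel because the interconnection is skew-symmetric, leaving the
power balance `R1·x1² + G·x2² + R2·x3² + Gsc·x5² + I_L·x4 = 0`. The dissipated powers are
nonnegative and the load draws the positive power `I_L·x4`, so this is impossible.
-/

theorem converter_power_balance {R1 R2 G Gsc IL x1 x2 x3 x4 x5 u1 u2 : ℝ}
    (e1 : 0 = -R1 * x1 + x5 - x2 * u1) (e2 : 0 = -G * x2 + x1 * u1 - x3 * u2)
    (e3 : 0 = -R2 * x3 - x4 + x2 * u2) (e4 : 0 = x3 - IL) (e5 : 0 = -Gsc * x5 - x1) :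
    R1 * x1 ^ 2 + G * x2 ^ 2 + R2 * x3 ^ 2 + Gsc * x5 ^ 2 + IL * x4 = 0 := by
  linear_combination x1 * e1 + x2 * e2 + x3 * e3 + x4 * e4 + x5 * e5

/-- For a positive load current there is no equilibrium with positive regulated
voltages `x2` and `x4` in the two-stage DC-DC converter model. -/
theorem stmt_1
    (R1 R2 G Gsc IL : ℝ)
    (hR1 : 0 < R1) (hR2 : 0 < R2) (hG : 0 < G) (hGsc : 0 < Gsc) (hIL : 0 < IL) :
    ¬ ∃ x1 x2 x3 x4 x5 u1 u2 : ℝ,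
      0 < x2 ∧ 0 < x4 ∧
      0 = -R1 * x1 + x5 - x2 * u1 ∧
      0 = -G * x2 + x1 * u1 - x3 * u2 ∧
      0 = -R2 * x3 - x4 + x2 * u2 ∧
      0 = x3 - IL ∧
      0 = -Gsc * x5 - x1 := by
  rintro ⟨x1, x2, x3, x4, x5, u1, u2, -, hx4, e1, e2, e3, e4, e5⟩
  have hpower : 0 < R1 * x1 ^ 2 + G * x2 ^ 2 + R2 * x3 ^ 2 + Gsc * x5 ^ 2 + IL * x4 := by
    positivity
  exact hpower.ne' (converter_power_balance e1 e2 e3 e4 e5)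
end

section
/- Let L2, C2, R2 > 0, κ1, κ2, κ3 > 0, I_L ∈ ℝ, and x4⋆ > 0. Let x2, x3, x4, x3ref : [0,∞) → ℝ be differentiable functions with x2(t) > 0 for all t, satisfying L2·x3'(t) = -R2·x3(t) - x4(t) + x2(t)·u2(t), C2·x4'(t) = x3(t) - I_L, the dynamic extension x3ref'(t) = -(κ2/C2)·(x3(t) - I_L) - κ3·(x4(t) - x4⋆), and the control law u2(t) = (1/x2(t))·[x4(t) + R2·x3ref(t) - κ1·(x3(t) - x3ref(t)) - L2·κ3·(x4(t) - x4⋆) - (L2·κ2/C2)·(x3(t) - I_L)]. Then x4(t) → x4⋆ as t → ∞, and the functions x3 and x3ref are bounded on [0,∞). -/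
/-!
Substituting the control law, the tracking error `e = x3 - x3ref` obeys `e' = -((R2 + κ1) / L2) e`,
while `z = x4 - x4⋆` and `y = x4' = (x3 - I_L) / C2` form the damped oscillator
`z'' + (κ2 / C2) z' + (κ3 / C2) z = -((R2 + κ1) / (L2 C2)) e` forced by `e`. A quadratic Lyapunov
function of `(z, y, e)`, with `e ^ 2` weighted heavily enough to absorb the forcing, decays
exponentially, so `z → 0` and `y`, `e`, hence `x3` and `x3ref`, stay bounded.
-/

open Filter Topology Set Real

theorem le_mul_exp_neg_of_hasDerivAt_le {V V' : ℝ → ℝ} {c : ℝ}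
    (hV : ∀ t, 0 ≤ t → HasDerivAt V (V' t) t) (hV' : ∀ t, 0 ≤ t → V' t ≤ -c * V t)
    {t : ℝ} (ht : 0 ≤ t) : V t ≤ V 0 * exp (-c * t) := by
  have hg : ∀ s, 0 ≤ s → HasDerivAt (fun s => exp (c * s) * V s)
      (exp (c * s) * (c * V s + V' s)) s := fun s hs =>
    ((((hasDerivAt_id' s).const_mul c).exp).mul (hV s hs)).congr_deriv (by ring)
  have hanti : AntitoneOn (fun s => exp (c * s) * V s) (Ici 0) := by
    refine antitoneOn_of_hasDerivWithinAt_nonpos (convex_Ici 0)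
      (fun s hs => (hg s hs).continuousAt.continuousWithinAt)
      (fun s hs => (hg s (interior_subset hs)).hasDerivWithinAt) fun s hs => ?_
    have hs : 0 ≤ s := interior_subset hs
    exact mul_nonpos_of_nonneg_of_nonpos (exp_pos _).le (by linarith [hV' s hs])
  have h := hanti self_mem_Ici ht ht
  simp only [mul_zero, exp_zero, one_mul] at h
  calc V t = exp (-c * t) * (exp (c * t) * V t) := by
        rw [← mul_assoc, ← exp_add]; simp
    _ ≤ V 0 * exp (-c * t) := by rw [mul_comm (V 0)]; gcongr

theorem tendsto_zero_of_sq_le_mul_exp_neg {f : ℝ → ℝ} {C c : ℝ} (hc : 0 < c)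
    (hf : ∀ t, 0 ≤ t → f t ^ 2 ≤ C * exp (-c * t)) : Tendsto f atTop (𝓝 0) := by
  have hbound : Tendsto (fun t => √(C * exp (-c * t))) atTop (𝓝 0) := by
    have : Tendsto (fun t => C * exp (-c * t)) atTop (𝓝 0) := by
      simpa using (tendsto_exp_atBot.comp
        (tendsto_id.const_mul_atTop_of_neg (neg_neg_of_pos hc))).const_mul C
    simpa using this.sqrt
  refine squeeze_zero_norm' ?_ hbound
  filter_upwards [eventually_ge_atTop 0] with t ht
  exact abs_le_sqrt (hf t ht)

theorem abs_le_sqrt_of_sq_le_mul_exp_neg {f : ℝ → ℝ} {C c : ℝ} (hc : 0 ≤ c)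
    (hf : ∀ t, 0 ≤ t → f t ^ 2 ≤ C * exp (-c * t)) : ∀ t, 0 ≤ t → |f t| ≤ √C := fun t ht => by
  have hC : 0 ≤ C := by simpa using (sq_nonneg (f 0)).trans (hf 0 le_rfl)
  refine abs_le_sqrt ((hf t ht).trans (mul_le_of_le_one_right hC ?_))
  exact exp_le_one_iff.mpr (by nlinarith)

-- Lyapunov function of `z' = y`, `y' = -p z - q y - β e`, `e' = -a e`: along it `u = q z + y`
-- satisfies `u' = -p z - β e`, so the `z y` cross terms of the derivative cancel.
def dampedOscLyapunov (p q K z y e : ℝ) : ℝ :=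
  (q * z + y) ^ 2 + y ^ 2 + 2 * p * z ^ 2 + K * e ^ 2

theorem exists_dampedOscLyapunov_dissipation {p q a : ℝ} (hp : 0 < p) (hq : 0 < q) (ha : 0 < a)
    (β : ℝ) : ∃ K c, 1 ≤ K ∧ 0 < c ∧ ∀ z y e : ℝ,
      -2 * p * q * z ^ 2 - 2 * q * y ^ 2 - 2 * β * e * (q * z + 2 * y) - 2 * a * K * e ^ 2
        ≤ -c * dampedOscLyapunov p q K z y e := by
  set K := (β ^ 2 * q / p + 4 * β ^ 2 / q) / a + 1
  set c := min (p * q / (2 * (q ^ 2 + p))) (min (q / 3) a)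
  have hK : 1 ≤ K := le_add_of_nonneg_left (by positivity)
  have hc : 0 < c := lt_min (by positivity) (lt_min (by positivity) ha)
  refine ⟨K, c, hK, hc, fun z y e => ?_⟩
  -- `K` is chosen so that Young's inequality on the two cross terms leaves `a * K * e ^ 2` of the
  -- dissipation of `e`.
  have hyoung_z : -2 * β * e * (q * z) ≤ p * q * z ^ 2 + β ^ 2 * q / p * e ^ 2 := by
    have : 0 ≤ q / p * (p * z + β * e) ^ 2 := by positivity
    have h : q / p * (p * z + β * e) ^ 2 = p * q * z ^ 2 + 2 * β * e * (q * z) + β ^ 2 * q / p * e ^ 2 := by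
      field_simp; ring
    linarith
  have hyoung_y : -2 * β * e * (2 * y) ≤ q * y ^ 2 + 4 * β ^ 2 / q * e ^ 2 := by
    have : 0 ≤ (q * y + 2 * β * e) ^ 2 / q := by positivity
    have h : (q * y + 2 * β * e) ^ 2 / q = q * y ^ 2 + 2 * β * e * (2 * y) + 4 * β ^ 2 / q * e ^ 2 := by
      field_simp; ring
    linarith
  have haK : 2 * a * K - (β ^ 2 * q / p + 4 * β ^ 2 / q) = a * K + a := by
    simp only [K]; field_simp; ring
  have hcz : c * (2 * (q ^ 2 + p)) ≤ p * q := by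
    have := min_le_left (p * q / (2 * (q ^ 2 + p))) (min (q / 3) a)
    rwa [le_div_iff₀ (by positivity)] at this
  have hcy : c ≤ q / 3 := (min_le_right _ _).trans (min_le_left _ _)
  have hca : c ≤ a := (min_le_right _ _).trans (min_le_right _ _)
  have hW : dampedOscLyapunov p q K z y e ≤ 2 * (q ^ 2 + p) * z ^ 2 + 3 * y ^ 2 + K * e ^ 2 := by
    unfold dampedOscLyapunov; nlinarith [sq_nonneg (q * z - y)]
  calc -2 * p * q * z ^ 2 - 2 * q * y ^ 2 - 2 * β * e * (q * z + 2 * y) - 2 * a * K * e ^ 2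
      ≤ -(p * q * z ^ 2) - q * y ^ 2 - a * K * e ^ 2 := by nlinarith [sq_nonneg e]
    _ ≤ -c * (2 * (q ^ 2 + p) * z ^ 2 + 3 * y ^ 2 + K * e ^ 2) := by
      nlinarith [mul_le_mul_of_nonneg_right hcz (sq_nonneg z),
        mul_le_mul_of_nonneg_right hcy (sq_nonneg y),
        mul_le_mul_of_nonneg_right hca (mul_nonneg (by linarith : (0:ℝ) ≤ K) (sq_nonneg e))]
    _ ≤ -c * dampedOscLyapunov p q K z y e := by nlinarith

theorem hasDerivAt_dampedOscLyapunov {z y e : ℝ → ℝ} {p q β a K t : ℝ}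
    (hz : HasDerivAt z (y t) t) (hy : HasDerivAt y (-p * z t - q * y t - β * e t) t)
    (he : HasDerivAt e (-a * e t) t) :
    HasDerivAt (fun s => dampedOscLyapunov p q K (z s) (y s) (e s))
      (-2 * p * q * z t ^ 2 - 2 * q * y t ^ 2 - 2 * β * e t * (q * z t + 2 * y t)
        - 2 * a * K * e t ^ 2) t := by
  unfold dampedOscLyapunov
  refine (((((hz.const_mul q).add hy).pow 2).add (hy.pow 2)).add
    ((hz.pow 2).const_mul (2 * p)) |>.add ((he.pow 2).const_mul K)).congr_deriv ?_
  simp only [Pi.add_apply]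
  push_cast
  ring

theorem dampedOsc_sq_add_sq_add_sq_le_mul_exp_neg {z y e : ℝ → ℝ} {p q β a : ℝ}
    (hp : 0 < p) (hq : 0 < q) (ha : 0 < a)
    (hz : ∀ t, 0 ≤ t → HasDerivAt z (y t) t)
    (hy : ∀ t, 0 ≤ t → HasDerivAt y (-p * z t - q * y t - β * e t) t)
    (he : ∀ t, 0 ≤ t → HasDerivAt e (-a * e t) t) :
    ∃ C c, 0 < c ∧ ∀ t, 0 ≤ t → z t ^ 2 + y t ^ 2 + e t ^ 2 ≤ C * exp (-c * t) := by
  obtain ⟨K, c, hK, hc, hdiss⟩ := exists_dampedOscLyapunov_dissipation hp hq ha β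
  set W := fun s => dampedOscLyapunov p q K (z s) (y s) (e s)
  set m := min (2 * p) 1
  have hm : 0 < m := lt_min (by positivity) one_pos
  have hcoercive : ∀ t, m * (z t ^ 2 + y t ^ 2 + e t ^ 2) ≤ W t := fun t => by
    have h2p := min_le_left (2 * p) 1
    have h1 := min_le_right (2 * p) 1
    simp only [W, dampedOscLyapunov]
    nlinarith [sq_nonneg (q * z t + y t), mul_le_mul_of_nonneg_right h2p (sq_nonneg (z t)),
      mul_le_mul_of_nonneg_right h1 (sq_nonneg (y t)),
      mul_le_mul_of_nonneg_right (h1.trans hK) (sq_nonneg (e t))]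
  refine ⟨W 0 / m, c, hc, fun t ht => ?_⟩
  have hdecay := le_mul_exp_neg_of_hasDerivAt_le
    (fun s hs => hasDerivAt_dampedOscLyapunov (hz s hs) (hy s hs) (he s hs))
    (fun s _ => hdiss (z s) (y s) (e s)) ht
  rw [div_mul_eq_mul_div, le_div_iff₀ hm, mul_comm]
  exact (hcoercive t).trans hdecay

theorem dampedOsc_tendsto_zero_and_bounded {z y e : ℝ → ℝ} {p q β a : ℝ}
    (hp : 0 < p) (hq : 0 < q) (ha : 0 < a)
    (hz : ∀ t, 0 ≤ t → HasDerivAt z (y t) t)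
    (hy : ∀ t, 0 ≤ t → HasDerivAt y (-p * z t - q * y t - β * e t) t)
    (he : ∀ t, 0 ≤ t → HasDerivAt e (-a * e t) t) :
    Tendsto z atTop (𝓝 0) ∧ ∃ M, ∀ t, 0 ≤ t → |y t| ≤ M ∧ |e t| ≤ M := by
  obtain ⟨C, c, hc, hdecay⟩ := dampedOsc_sq_add_sq_add_sq_le_mul_exp_neg hp hq ha hz hy he
  refine ⟨tendsto_zero_of_sq_le_mul_exp_neg (C := C) hc fun t ht => ?_, √C, fun t ht => ⟨?_, ?_⟩⟩
  · linarith [hdecay t ht, sq_nonneg (y t), sq_nonneg (e t)]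
  · refine abs_le_sqrt_of_sq_le_mul_exp_neg hc.le (fun t ht => ?_) t ht
    linarith [hdecay t ht, sq_nonneg (z t), sq_nonneg (e t)]
  · refine abs_le_sqrt_of_sq_le_mul_exp_neg hc.le (fun t ht => ?_) t ht
    linarith [hdecay t ht, sq_nonneg (z t), sq_nonneg (y t)]

theorem closedLoop_deriv_x3 {L2 C2 R2 κ1 κ2 κ3 IL x4s x2 x3 x4 x3ref u2 dx3 : ℝ}
    (hL2 : L2 ≠ 0) (hx2 : x2 ≠ 0)
    (hode : L2 * dx3 = -R2 * x3 - x4 + x2 * u2)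
    (hu : u2 = (1 / x2) * (x4 + R2 * x3ref - κ1 * (x3 - x3ref)
        - L2 * κ3 * (x4 - x4s) - (L2 * κ2 / C2) * (x3 - IL))) :
    dx3 = -((R2 + κ1) / L2) * (x3 - x3ref) - κ3 * (x4 - x4s) - κ2 / C2 * (x3 - IL) := by
  subst hu
  field_simp at hode ⊢
  linear_combination hode

theorem stmt_3_general
    (L2 C2 R2 κ1 κ2 κ3 IL x4s : ℝ)
    (hL2 : 0 < L2) (hC2 : 0 < C2) (hR2 : 0 < R2)
    (hκ1 : 0 < κ1) (hκ2 : 0 < κ2) (hκ3 : 0 < κ3)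
    (x2 x3 x4 x3ref u2 : ℝ → ℝ)
    (hd3 : ∀ t, 0 ≤ t → DifferentiableAt ℝ x3 t)
    (hd4 : ∀ t, 0 ≤ t → DifferentiableAt ℝ x4 t)
    (hdref : ∀ t, 0 ≤ t → DifferentiableAt ℝ x3ref t)
    (hx2pos : ∀ t, 0 ≤ t → 0 < x2 t)
    (hode3 : ∀ t, 0 ≤ t → L2 * deriv x3 t = -R2 * x3 t - x4 t + x2 t * u2 t)
    (hode4 : ∀ t, 0 ≤ t → C2 * deriv x4 t = x3 t - IL)
    (href : ∀ t, 0 ≤ t →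
      deriv x3ref t = -(κ2 / C2) * (x3 t - IL) - κ3 * (x4 t - x4s))
    (hu2 : ∀ t, 0 ≤ t →
      u2 t = (1 / x2 t) * (x4 t + R2 * x3ref t - κ1 * (x3 t - x3ref t)
        - L2 * κ3 * (x4 t - x4s) - (L2 * κ2 / C2) * (x3 t - IL))) :
    Tendsto x4 atTop (𝓝 x4s) ∧
    (∃ M : ℝ, ∀ t, 0 ≤ t → |x3 t| ≤ M) ∧
    (∃ M : ℝ, ∀ t, 0 ≤ t → |x3ref t| ≤ M) := by
  set a := (R2 + κ1) / L2
  have hx3' : ∀ t, 0 ≤ t → deriv x3 t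
      = -a * (x3 t - x3ref t) - κ3 * (x4 t - x4s) - κ2 / C2 * (x3 t - IL) := fun t ht =>
    closedLoop_deriv_x3 hL2.ne' (hx2pos t ht).ne' (hode3 t ht) (hu2 t ht)
  obtain ⟨hz, M, hM⟩ := dampedOsc_tendsto_zero_and_bounded
    (z := fun t => x4 t - x4s) (y := fun t => (x3 t - IL) / C2) (e := fun t => x3 t - x3ref t)
    (p := κ3 / C2) (q := κ2 / C2) (β := a / C2) (a := a) (by positivity) (by positivity)
    (by positivity)
    (fun t ht => ((hd4 t ht).hasDerivAt.sub_const x4s).congr_deriv (by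
      field_simp; linarith [hode4 t ht]))
    (fun t ht => (((hd3 t ht).hasDerivAt.sub_const IL).div_const C2).congr_deriv (by
      rw [hx3' t ht]; field_simp; ring))
    (fun t ht => ((hd3 t ht).hasDerivAt.sub (hdref t ht).hasDerivAt).congr_deriv (by
      rw [hx3' t ht, href t ht]; ring))
  have hx3 : ∀ t, 0 ≤ t → |x3 t| ≤ C2 * M + |IL| := fun t ht => by
    have hy := (hM t ht).1
    rw [abs_div, abs_of_pos hC2, div_le_iff₀ hC2] at hy
    linarith [abs_sub_abs_le_abs_sub (x3 t) IL]
  refine ⟨tendsto_sub_nhds_zero_iff.mp hz, ⟨_, hx3⟩, ⟨C2 * M + |IL| + M, fun t ht => ?_⟩⟩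
  linarith [abs_sub_abs_le_abs_sub (x3ref t) (x3 t), abs_sub_comm (x3ref t) (x3 t), hx3 t ht,
    (hM t ht).2]

/-- Lemma 2: the proposed dynamic state feedback for the subsystem Σ1 ensures
global regulation of `x4` to `x4⋆` with `x3` and `x3ref` bounded. -/
theorem stmt_3
    (L2 C2 R2 κ1 κ2 κ3 IL x4s : ℝ)
    (hL2 : 0 < L2) (hC2 : 0 < C2) (hR2 : 0 < R2)
    (hκ1 : 0 < κ1) (hκ2 : 0 < κ2) (hκ3 : 0 < κ3) (hx4s : 0 < x4s)
    (x2 x3 x4 x3ref u2 : ℝ → ℝ)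
    (hd2 : ∀ t, 0 ≤ t → DifferentiableAt ℝ x2 t)
    (hd3 : ∀ t, 0 ≤ t → DifferentiableAt ℝ x3 t)
    (hd4 : ∀ t, 0 ≤ t → DifferentiableAt ℝ x4 t)
    (hdref : ∀ t, 0 ≤ t → DifferentiableAt ℝ x3ref t)
    (hx2pos : ∀ t, 0 ≤ t → 0 < x2 t)
    (hode3 : ∀ t, 0 ≤ t → L2 * deriv x3 t = -R2 * x3 t - x4 t + x2 t * u2 t)
    (hode4 : ∀ t, 0 ≤ t → C2 * deriv x4 t = x3 t - IL)
    (href : ∀ t, 0 ≤ t →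
      deriv x3ref t = -(κ2 / C2) * (x3 t - IL) - κ3 * (x4 t - x4s))
    (hu2 : ∀ t, 0 ≤ t →
      u2 t = (1 / x2 t) * (x4 t + R2 * x3ref t - κ1 * (x3 t - x3ref t)
        - L2 * κ3 * (x4 t - x4s) - (L2 * κ2 / C2) * (x3 t - IL))) :
    Tendsto x4 atTop (𝓝 x4s) ∧
    (∃ M : ℝ, ∀ t, 0 ≤ t → |x3 t| ≤ M) ∧
    (∃ M : ℝ, ∀ t, 0 ≤ t → |x3ref t| ≤ M) :=
  stmt_3_general L2 C2 R2 κ1 κ2 κ3 IL x4s hL2 hC2 hR2 hκ1 hκ2 hκ3 x2 x3 x4 x3ref u2 hd3 hd4 hdref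
    hx2pos hode3 hode4 href hu2
end

section
/- Let L2, C2, R2 > 0, κ1, κ2, κ3 > 0, I_L ∈ ℝ, and x4⋆ ∈ ℝ. Let x2, x3, x4, x3ref : [0,∞) → ℝ be differentiable functions with x2(t) > 0 for all t, satisfying L2·x3'(t) = -R2·x3(t) - x4(t) + x2(t)·u2(t), x3ref'(t) = -(κ2/C2)·(x3(t) - I_L) - κ3·(x4(t) - x4⋆), and u2(t) = (1/x2(t))·[x4(t) + R2·x3ref(t) - κ1·(x3(t) - x3ref(t)) - L2·κ3·(x4(t) - x4⋆) - (L2·κ2/C2)·(x3(t) - I_L)]. Then the error x̃3(t) := x3(t) - x3ref(t) satisfies the linear equation L2·x̃3'(t) = -(R2 + κ1)·x̃3(t) for all t ≥ 0, and consequently x̃3(t) = x̃3(0)·exp(-(R2 + κ1)·t/L2), so x̃3(t) → 0 as t → ∞. -/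
/-!
Substituting the control law into the inductor equation cancels `x2·u2` against the
bracket, and subtracting `L2` times the reference dynamics leaves
`L2·x̃3' = -(R2 + κ1)·x̃3`. A solution of `e' = a·e` on `[0, ∞)` satisfies
`(e·exp(-a t))' = 0`, so `e t = e 0 · exp (a t)`, which tends to `0` when `a < 0`.
-/

open Filter Topology

theorem eq_mul_exp_of_hasDerivAt_const_mul {e : ℝ → ℝ} {a : ℝ}
    (he : ∀ t, 0 ≤ t → HasDerivAt e (a * e t) t) {t : ℝ} (ht : 0 ≤ t) :
    e t = e 0 * Real.exp (a * t) := by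
  set g : ℝ → ℝ := fun s => e s * Real.exp (-(a * s))
  have hg : ∀ s, 0 ≤ s → HasDerivAt g 0 s := by
    intro s hs
    have hexp : HasDerivAt (fun r => Real.exp (-(a * r))) (Real.exp (-(a * s)) * -a) s := by
      simpa using ((hasDerivAt_id s).const_mul a).neg.exp
    refine ((he s hs).mul hexp).congr_deriv ?_
    ring
  have hconst : g t = g 0 :=
    constant_of_has_deriv_right_zero
      (fun s hs => (hg s hs.1).continuousAt.continuousWithinAt)
      (fun s hs => (hg s hs.1).hasDerivWithinAt) t ⟨ht, le_rfl⟩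
  simp only [g, mul_zero, neg_zero, Real.exp_zero, mul_one] at hconst
  rw [← hconst, mul_assoc, ← Real.exp_add, neg_add_cancel, Real.exp_zero, mul_one]

theorem tendsto_const_mul_exp_mul_atTop_nhds_zero {a : ℝ} (ha : a < 0) (c : ℝ) :
    Tendsto (fun t => c * Real.exp (a * t)) atTop (𝓝 0) := by
  have hlin : Tendsto (fun t => a * t) atTop atBot :=
    tendsto_id.const_mul_atTop_of_neg ha
  simpa using (Real.tendsto_exp_atBot.comp hlin).const_mul c

/-- `d3` and `dref` stand for the values `x3'(t)` and `x3ref'(t)`. -/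
theorem sigma1_error_dynamics {L2 C2 R2 κ1 κ2 κ3 IL x4s x2 x3 x4 x3ref u2 d3 dref : ℝ}
    (hx2 : x2 ≠ 0)
    (hode3 : L2 * d3 = -R2 * x3 - x4 + x2 * u2)
    (href : dref = -(κ2 / C2) * (x3 - IL) - κ3 * (x4 - x4s))
    (hu2 : u2 = (1 / x2) * (x4 + R2 * x3ref - κ1 * (x3 - x3ref)
        - L2 * κ3 * (x4 - x4s) - (L2 * κ2 / C2) * (x3 - IL))) :
    L2 * (d3 - dref) = -(R2 + κ1) * (x3 - x3ref) := by
  rw [mul_sub, hode3, href, hu2, ← mul_assoc, mul_one_div_cancel hx2, one_mul]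
  ring

theorem stmt_4_general
    (L2 C2 R2 κ1 κ2 κ3 IL x4s : ℝ)
    (hL2 : 0 < L2) (hR2 : 0 < R2)
    (hκ1 : 0 < κ1)
    (x2 x3 x4 x3ref u2 : ℝ → ℝ)
    (hd3 : ∀ t, 0 ≤ t → DifferentiableAt ℝ x3 t)
    (hdref : ∀ t, 0 ≤ t → DifferentiableAt ℝ x3ref t)
    (hx2pos : ∀ t, 0 ≤ t → 0 < x2 t)
    (hode3 : ∀ t, 0 ≤ t → L2 * deriv x3 t = -R2 * x3 t - x4 t + x2 t * u2 t)
    (href : ∀ t, 0 ≤ t →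
      deriv x3ref t = -(κ2 / C2) * (x3 t - IL) - κ3 * (x4 t - x4s))
    (hu2 : ∀ t, 0 ≤ t →
      u2 t = (1 / x2 t) * (x4 t + R2 * x3ref t - κ1 * (x3 t - x3ref t)
        - L2 * κ3 * (x4 t - x4s) - (L2 * κ2 / C2) * (x3 t - IL))) :
    (∀ t, 0 ≤ t →
      L2 * deriv (fun s => x3 s - x3ref s) t = -(R2 + κ1) * (x3 t - x3ref t)) ∧
    (∀ t, 0 ≤ t →
      x3 t - x3ref t = (x3 0 - x3ref 0) * Real.exp (-(R2 + κ1) * t / L2)) ∧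
    Tendsto (fun t => x3 t - x3ref t) atTop (𝓝 0) := by
  set e : ℝ → ℝ := fun s => x3 s - x3ref s
  have he_deriv : ∀ t, 0 ≤ t → HasDerivAt e (deriv x3 t - deriv x3ref t) t := fun t ht =>
    (hd3 t ht).hasDerivAt.sub (hdref t ht).hasDerivAt
  have he_lin : ∀ t, 0 ≤ t → L2 * deriv e t = -(R2 + κ1) * e t := fun t ht => by
    rw [(he_deriv t ht).deriv]
    exact sigma1_error_dynamics (hx2pos t ht).ne' (hode3 t ht) (href t ht) (hu2 t ht)
  have he_ode : ∀ t, 0 ≤ t → HasDerivAt e (-(R2 + κ1) / L2 * e t) t := fun t ht => by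
    rw [div_mul_eq_mul_div, ← he_lin t ht, mul_div_cancel_left₀ _ hL2.ne']
    exact (he_deriv t ht).differentiableAt.hasDerivAt
  have he_sol : ∀ t, 0 ≤ t → e t = e 0 * Real.exp (-(R2 + κ1) * t / L2) := fun t ht => by
    rw [← div_mul_eq_mul_div]
    exact eq_mul_exp_of_hasDerivAt_const_mul he_ode ht
  refine ⟨he_lin, he_sol, ?_⟩
  have hrate : -(R2 + κ1) / L2 < 0 := div_neg_of_neg_of_pos (by linarith) hL2
  refine (tendsto_const_mul_exp_mul_atTop_nhds_zero hrate (e 0)).congr' ?_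
  filter_upwards [eventually_ge_atTop 0] with t ht
  rw [he_sol t ht, div_mul_eq_mul_div]

/-- Under the Σ1 control law, the current error `x̃3 = x3 - x3ref` obeys the
linear equation `L2·x̃3' = -(R2 + κ1)·x̃3`, hence decays exponentially to zero. -/
theorem stmt_4
    (L2 C2 R2 κ1 κ2 κ3 IL x4s : ℝ)
    (hL2 : 0 < L2) (hC2 : 0 < C2) (hR2 : 0 < R2)
    (hκ1 : 0 < κ1) (hκ2 : 0 < κ2) (hκ3 : 0 < κ3)
    (x2 x3 x4 x3ref u2 : ℝ → ℝ)
    (hd2 : ∀ t, 0 ≤ t → DifferentiableAt ℝ x2 t)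
    (hd3 : ∀ t, 0 ≤ t → DifferentiableAt ℝ x3 t)
    (hd4 : ∀ t, 0 ≤ t → DifferentiableAt ℝ x4 t)
    (hdref : ∀ t, 0 ≤ t → DifferentiableAt ℝ x3ref t)
    (hx2pos : ∀ t, 0 ≤ t → 0 < x2 t)
    (hode3 : ∀ t, 0 ≤ t → L2 * deriv x3 t = -R2 * x3 t - x4 t + x2 t * u2 t)
    (href : ∀ t, 0 ≤ t →
      deriv x3ref t = -(κ2 / C2) * (x3 t - IL) - κ3 * (x4 t - x4s))
    (hu2 : ∀ t, 0 ≤ t →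
      u2 t = (1 / x2 t) * (x4 t + R2 * x3ref t - κ1 * (x3 t - x3ref t)
        - L2 * κ3 * (x4 t - x4s) - (L2 * κ2 / C2) * (x3 t - IL))) :
    (∀ t, 0 ≤ t →
      L2 * deriv (fun s => x3 s - x3ref s) t = -(R2 + κ1) * (x3 t - x3ref t)) ∧
    (∀ t, 0 ≤ t →
      x3 t - x3ref t = (x3 0 - x3ref 0) * Real.exp (-(R2 + κ1) * t / L2)) ∧
    Tendsto (fun t => x3 t - x3ref t) atTop (𝓝 0) :=
  stmt_4_general L2 C2 R2 κ1 κ2 κ3 IL x4s hL2 hR2 hκ1 x2 x3 x4 x3ref u2 hd3 hdref hx2pos hode3 href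
    hu2
end

section
/- Let L2, C2, R2 > 0, κ1, κ2, κ3 > 0, I_L ∈ ℝ, and x4⋆ ∈ ℝ. Let x2, x3, x4, x3ref : [0,∞) → ℝ be differentiable with x2(t) > 0, satisfying L2·x3'(t) = -R2·x3(t) - x4(t) + x2(t)·u2(t), C2·x4'(t) = x3(t) - I_L, x3ref'(t) = -(κ2/C2)·(x3(t) - I_L) - κ3·(x4(t) - x4⋆), and u2(t) = (1/x2(t))·[x4(t) + R2·x3ref(t) - κ1·(x3(t) - x3ref(t)) - L2·κ3·(x4(t) - x4⋆) - (L2·κ2/C2)·(x3(t) - I_L)]. Define x̃3 := x3 - x3ref, x̃4 := x4 - x4⋆, z := -(1/κ3)·(x3ref + κ2·x̃4), and z̃ := z + I_L/κ3. Then for all t ≥ 0 the vector χ = (x̃3, x̃4, z̃) satisfies the linear ODE: x̃3'(t) = -((R2 + κ1)/L2)·x̃3(t), x̃4'(t) = (1/C2)·(x̃3(t) - κ2·x̃4(t) - κ3·z̃(t)), and z̃'(t) = x̃4(t). -/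
/-!
Substituting the control law gives `L2 x3' = L2 x3ref' - (R2 + κ1) x̃3`, so `x̃3` decouples.
The integral state `z̃` is chosen so that the load mismatch `x3 - IL` equals
`x̃3 - κ2 x̃4 - κ3 z̃`, which turns `C2 x4' = x3 - IL` into a linear equation, and `x3ref'` is
chosen so that `z̃' = x̃4`.
-/

section ClosedLoop

variable {L2 C2 R2 κ1 κ2 κ3 IL x4s : ℝ} {x2 x3 x4 x3ref u2 : ℝ → ℝ} {t : ℝ}

/-- The paper's `z̃`. -/
noncomputable def integralState (κ2 κ3 IL x4s : ℝ) (x3ref x4 : ℝ → ℝ) (s : ℝ) : ℝ :=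
  -(1 / κ3) * (x3ref s + κ2 * (x4 s - x4s)) + IL / κ3

theorem hasDerivAt_current_error (hL2 : L2 ≠ 0) (hx2 : x2 t ≠ 0)
    (hd3 : DifferentiableAt ℝ x3 t) (hdref : DifferentiableAt ℝ x3ref t)
    (hode3 : L2 * deriv x3 t = -R2 * x3 t - x4 t + x2 t * u2 t)
    (href : deriv x3ref t = -(κ2 / C2) * (x3 t - IL) - κ3 * (x4 t - x4s))
    (hu2 : u2 t = (1 / x2 t) * (x4 t + R2 * x3ref t - κ1 * (x3 t - x3ref t)
        - L2 * κ3 * (x4 t - x4s) - (L2 * κ2 / C2) * (x3 t - IL))) :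
    HasDerivAt (fun s => x3 s - x3ref s) (-((R2 + κ1) / L2) * (x3 t - x3ref t)) t := by
  have hcontrol : x2 t * u2 t = x4 t + R2 * x3ref t - κ1 * (x3 t - x3ref t)
      - L2 * κ3 * (x4 t - x4s) - (L2 * κ2 / C2) * (x3 t - IL) := by
    rw [hu2]
    field_simp
  have hclosed : L2 * (deriv x3 t - deriv x3ref t) = -(R2 + κ1) * (x3 t - x3ref t) := by
    linear_combination hode3 + hcontrol - L2 * href
  refine (hd3.hasDerivAt.sub hdref.hasDerivAt).congr_deriv ?_
  rw [← neg_div, div_mul_eq_mul_div, eq_div_iff hL2]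
  linear_combination hclosed

theorem hasDerivAt_voltage_error (hC2 : C2 ≠ 0) (hd4 : DifferentiableAt ℝ x4 t)
    (hode4 : C2 * deriv x4 t = x3 t - IL) :
    HasDerivAt (fun s => x4 s - x4s) ((x3 t - IL) / C2) t := by
  refine (hd4.hasDerivAt.sub_const x4s).congr_deriv ?_
  field_simp
  linear_combination hode4

theorem hasDerivAt_integralState (hC2 : C2 ≠ 0) (hκ3 : κ3 ≠ 0)
    (hd4 : DifferentiableAt ℝ x4 t) (hdref : DifferentiableAt ℝ x3ref t)
    (hode4 : C2 * deriv x4 t = x3 t - IL)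
    (href : deriv x3ref t = -(κ2 / C2) * (x3 t - IL) - κ3 * (x4 t - x4s)) :
    HasDerivAt (integralState κ2 κ3 IL x4s x3ref x4) (x4 t - x4s) t := by
  have hz : HasDerivAt (integralState κ2 κ3 IL x4s x3ref x4)
      (-(1 / κ3) * (deriv x3ref t + κ2 * ((x3 t - IL) / C2))) t :=
    ((hdref.hasDerivAt.add ((hasDerivAt_voltage_error hC2 hd4 hode4).const_mul κ2)).const_mul
      (-(1 / κ3))).add_const (IL / κ3)
  refine hz.congr_deriv ?_
  rw [href]
  field_simp
  ring

end ClosedLoop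

theorem stmt_5_general
    (L2 C2 R2 κ1 κ2 κ3 IL x4s : ℝ)
    (hL2 : 0 < L2) (hC2 : 0 < C2)
    (hκ3 : 0 < κ3)
    (x2 x3 x4 x3ref u2 : ℝ → ℝ)
    (hd3 : ∀ t, 0 ≤ t → DifferentiableAt ℝ x3 t)
    (hd4 : ∀ t, 0 ≤ t → DifferentiableAt ℝ x4 t)
    (hdref : ∀ t, 0 ≤ t → DifferentiableAt ℝ x3ref t)
    (hx2pos : ∀ t, 0 ≤ t → 0 < x2 t)
    (hode3 : ∀ t, 0 ≤ t → L2 * deriv x3 t = -R2 * x3 t - x4 t + x2 t * u2 t)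
    (hode4 : ∀ t, 0 ≤ t → C2 * deriv x4 t = x3 t - IL)
    (href : ∀ t, 0 ≤ t →
      deriv x3ref t = -(κ2 / C2) * (x3 t - IL) - κ3 * (x4 t - x4s))
    (hu2 : ∀ t, 0 ≤ t →
      u2 t = (1 / x2 t) * (x4 t + R2 * x3ref t - κ1 * (x3 t - x3ref t)
        - L2 * κ3 * (x4 t - x4s) - (L2 * κ2 / C2) * (x3 t - IL))) :
    ∀ t, 0 ≤ t →
      deriv (fun s => x3 s - x3ref s) t
          = -((R2 + κ1) / L2) * (x3 t - x3ref t) ∧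
      deriv (fun s => x4 s - x4s) t
          = (1 / C2) * ((x3 t - x3ref t) - κ2 * (x4 t - x4s)
            - κ3 * (-(1 / κ3) * (x3ref t + κ2 * (x4 t - x4s)) + IL / κ3)) ∧
      deriv (fun s => -(1 / κ3) * (x3ref s + κ2 * (x4 s - x4s)) + IL / κ3) t
          = x4 t - x4s := by
  intro t ht
  refine ⟨?_, ?_, ?_⟩
  · exact (hasDerivAt_current_error hL2.ne' (hx2pos t ht).ne' (hd3 t ht) (hdref t ht)
      (hode3 t ht) (href t ht) (hu2 t ht)).deriv
  · rw [(hasDerivAt_voltage_error hC2.ne' (hd4 t ht) (hode4 t ht)).deriv]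
    field_simp
    ring
  · exact (hasDerivAt_integralState hC2.ne' hκ3.ne' (hd4 t ht) (hdref t ht) (hode4 t ht)
      (href t ht)).deriv

/-- In the coordinates `χ = (x̃3, x̃4, z̃)` the closed-loop subsystem Σ1 obeys a
linear time-invariant ODE. -/
theorem stmt_5
    (L2 C2 R2 κ1 κ2 κ3 IL x4s : ℝ)
    (hL2 : 0 < L2) (hC2 : 0 < C2) (hR2 : 0 < R2)
    (hκ1 : 0 < κ1) (hκ2 : 0 < κ2) (hκ3 : 0 < κ3)
    (x2 x3 x4 x3ref u2 : ℝ → ℝ)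
    (hd2 : ∀ t, 0 ≤ t → DifferentiableAt ℝ x2 t)
    (hd3 : ∀ t, 0 ≤ t → DifferentiableAt ℝ x3 t)
    (hd4 : ∀ t, 0 ≤ t → DifferentiableAt ℝ x4 t)
    (hdref : ∀ t, 0 ≤ t → DifferentiableAt ℝ x3ref t)
    (hx2pos : ∀ t, 0 ≤ t → 0 < x2 t)
    (hode3 : ∀ t, 0 ≤ t → L2 * deriv x3 t = -R2 * x3 t - x4 t + x2 t * u2 t)
    (hode4 : ∀ t, 0 ≤ t → C2 * deriv x4 t = x3 t - IL)
    (href : ∀ t, 0 ≤ t →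
      deriv x3ref t = -(κ2 / C2) * (x3 t - IL) - κ3 * (x4 t - x4s))
    (hu2 : ∀ t, 0 ≤ t →
      u2 t = (1 / x2 t) * (x4 t + R2 * x3ref t - κ1 * (x3 t - x3ref t)
        - L2 * κ3 * (x4 t - x4s) - (L2 * κ2 / C2) * (x3 t - IL))) :
    ∀ t, 0 ≤ t →
      deriv (fun s => x3 s - x3ref s) t
          = -((R2 + κ1) / L2) * (x3 t - x3ref t) ∧
      deriv (fun s => x4 s - x4s) t
          = (1 / C2) * ((x3 t - x3ref t) - κ2 * (x4 t - x4s)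
            - κ3 * (-(1 / κ3) * (x3ref t + κ2 * (x4 t - x4s)) + IL / κ3)) ∧
      deriv (fun s => -(1 / κ3) * (x3ref s + κ2 * (x4 s - x4s)) + IL / κ3) t
          = x4 t - x4s :=
  stmt_5_general L2 C2 R2 κ1 κ2 κ3 IL x4s hL2 hC2 hκ3 x2 x3 x4 x3ref u2 hd3 hd4 hdref hx2pos hode3
    hode4 href hu2
end

section
/- Let L2, C2, R2 > 0 and κ1, κ2, κ3 > 0 be real numbers. Then every complex eigenvalue of the real 3×3 matrix A = [[-(R2 + κ1)/L2, 0, 0], [1/C2, -κ2/C2, -κ3/C2], [0, 1, 0]] has strictly negative real part; that is, A is a Hurwitz matrix. -/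
/-!
The matrix is block lower triangular, with the scalar block `-(R2 + κ1) / L2` and the companion
block of `X ^ 2 + (κ2 / C2) X + κ3 / C2`, so its characteristic polynomial is
`(X + (R2 + κ1) / L2) (X ^ 2 + (κ2 / C2) X + κ3 / C2)`. The linear factor has a negative root, and
a quadratic with positive coefficients has roots either real (hence negative) or with real part
`-κ2 / (2 C2)`.
-/

open Matrix

theorem det_algebraMap_sub_blockCompanion {R : Type*} [CommRing R] (a b p q μ : R) :
    (algebraMap R (Matrix (Fin 3) (Fin 3) R) μ - !![a, 0, 0; b, -p, -q; 0, 1, 0]).det =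
      (μ - a) * (μ ^ 2 + p * μ + q) := by
  rw [det_fin_three]
  simp [algebraMap_matrix_apply]
  ring

theorem mem_spectrum_blockCompanion {K : Type*} [Field K] {a b p q μ : K}
    (hμ : μ ∈ spectrum K !![a, 0, 0; b, -p, -q; 0, 1, 0]) :
    μ = a ∨ μ ^ 2 + p * μ + q = 0 := by
  rw [spectrum.mem_iff, isUnit_iff_isUnit_det, isUnit_iff_ne_zero, not_not,
    det_algebraMap_sub_blockCompanion] at hμ
  simpa [sub_eq_zero] using hμ

theorem Complex.re_neg_of_sq_add_mul_add_eq_zero {p q : ℝ} (hp : 0 < p) (hq : 0 < q) {z : ℂ}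
    (hz : z ^ 2 + p * z + q = 0) : z.re < 0 := by
  have hre : z.re ^ 2 - z.im ^ 2 + p * z.re + q = 0 := by
    simpa [sq] using congrArg Complex.re hz
  have him : z.im * (2 * z.re + p) = 0 := by
    have := congrArg Complex.im hz
    simp only [sq, add_im, mul_im, ofReal_re, ofReal_im, zero_mul, add_zero, zero_im] at this
    linarith
  rcases mul_eq_zero.mp him with h | h
  · rw [h] at hre
    nlinarith
  · linarith

/-- The closed-loop error matrix of the subsystem Σ1 is Hurwitz: all its complex
eigenvalues have strictly negative real part. -/
theorem stmt_6
    (L2 C2 R2 κ1 κ2 κ3 : ℝ)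
    (hL2 : 0 < L2) (hC2 : 0 < C2) (hR2 : 0 < R2)
    (hκ1 : 0 < κ1) (hκ2 : 0 < κ2) (hκ3 : 0 < κ3) :
    ∀ μ : ℂ,
      μ ∈ spectrum ℂ
        ((!![-(R2 + κ1) / L2, 0, 0;
             1 / C2, -κ2 / C2, -κ3 / C2;
             0, 1, 0] : Matrix (Fin 3) (Fin 3) ℝ).map (Complex.ofReal)) →
      μ.re < 0 := by
  intro μ hμ
  have hA : ((!![-(R2 + κ1) / L2, 0, 0; 1 / C2, -κ2 / C2, -κ3 / C2; 0, 1, 0] :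
      Matrix (Fin 3) (Fin 3) ℝ).map Complex.ofReal) =
      !![((-(R2 + κ1) / L2 : ℝ) : ℂ), 0, 0; ((1 / C2 : ℝ) : ℂ), -((κ2 / C2 : ℝ) : ℂ),
        -((κ3 / C2 : ℝ) : ℂ); 0, 1, 0] := by
    ext i j
    fin_cases i <;> fin_cases j <;> simp [neg_div]
  rw [hA] at hμ
  rcases mem_spectrum_blockCompanion hμ with rfl | hquad
  · rw [Complex.ofReal_re]
    exact div_neg_of_neg_of_pos (by linarith) hL2
  · exact Complex.re_neg_of_sq_add_mul_add_eq_zero (by positivity) (by positivity) hquad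
end

section
/- Let L1, C1, Csc > 0 and R1, Gsc ≥ 0, G ≥ 0 be real parameters. Let x1, x2, x3, x5, u1, u2 : [0,∞) → ℝ be functions, with x1, x2, x5 differentiable and x3·u2·x2 locally integrable, satisfying for all t ≥ 0: L1·x1'(t) = -R1·x1(t) + x5(t) - x2(t)·u1(t), C1·x2'(t) = -G·x2(t) + x1(t)·u1(t) - x3(t)·u2(t), and Csc·x5'(t) = -Gsc·x5(t) - x1(t). Then for every T ≥ 0, ∫₀ᵀ x2(t)·(-x3(t)·u2(t)) dt ≥ G·∫₀ᵀ x2(t)^2 dt - (1/2)·(L1·x1(0)^2 + C1·x2(0)^2 + Csc·x5(0)^2). In particular, for all control signals u1 and u2, the map from -y := -x3·u2 to x2 is output strictly passive. -/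
open MeasureTheory intervalIntegral

/-!
The stored energy `V = ½ (L1 x1² + C1 x2² + Csc x5²)` of Σ2 satisfies the power balance
`V' = x2 · (-x3 u2) - R1 x1² - G x2² - Gsc x5²`, so `V' ≤ x2 · (-x3 u2) - G x2²`.
Integrating over `[0, T]` and using `V T ≥ 0` gives the dissipation inequality with `β = V 0`.
-/

namespace TwoStageConverter

noncomputable def storage (L1 C1 Csc : ℝ) (x1 x2 x5 : ℝ → ℝ) (t : ℝ) : ℝ :=
  (1 / 2) * (L1 * x1 t ^ 2 + C1 * x2 t ^ 2 + Csc * x5 t ^ 2)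

lemma storage_nonneg {L1 C1 Csc : ℝ} (hL1 : 0 ≤ L1) (hC1 : 0 ≤ C1) (hCsc : 0 ≤ Csc)
    (x1 x2 x5 : ℝ → ℝ) (t : ℝ) : 0 ≤ storage L1 C1 Csc x1 x2 x5 t := by
  unfold storage
  positivity

lemma hasDerivAt_storage (L1 C1 Csc : ℝ) {x1 x2 x5 : ℝ → ℝ} {d1 d2 d5 t : ℝ}
    (h1 : HasDerivAt x1 d1 t) (h2 : HasDerivAt x2 d2 t) (h5 : HasDerivAt x5 d5 t) :
    HasDerivAt (storage L1 C1 Csc x1 x2 x5)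
      (x1 t * (L1 * d1) + x2 t * (C1 * d2) + x5 t * (Csc * d5)) t := by
  have h := (((h1.pow 2).const_mul L1).add ((h2.pow 2).const_mul C1) |>.add
    ((h5.pow 2).const_mul Csc)).const_mul (1 / 2 : ℝ)
  refine h.congr_deriv ?_
  push_cast
  ring

lemma power_balance {R1 G Gsc a1 a2 a5 u1 y v1 v2 v5 : ℝ}
    (h1 : v1 = -R1 * a1 + a5 - a2 * u1) (h2 : v2 = -G * a2 + a1 * u1 - y)
    (h5 : v5 = -Gsc * a5 - a1) :
    a1 * v1 + a2 * v2 + a5 * v5 = a2 * -y - R1 * a1 ^ 2 - G * a2 ^ 2 - Gsc * a5 ^ 2 := by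
  subst h1 h2 h5
  ring

lemma power_le_supply {R1 G Gsc a1 a2 a5 u1 y v1 v2 v5 : ℝ} (hR1 : 0 ≤ R1) (hGsc : 0 ≤ Gsc)
    (h1 : v1 = -R1 * a1 + a5 - a2 * u1) (h2 : v2 = -G * a2 + a1 * u1 - y)
    (h5 : v5 = -Gsc * a5 - a1) :
    a1 * v1 + a2 * v2 + a5 * v5 ≤ a2 * -y - G * a2 ^ 2 := by
  rw [power_balance h1 h2 h5]
  linarith [mul_nonneg hR1 (sq_nonneg a1), mul_nonneg hGsc (sq_nonneg a5)]

end TwoStageConverter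

open TwoStageConverter in
theorem stmt_10_general
    (L1 C1 Csc R1 G Gsc : ℝ)
    (hL1 : 0 < L1) (hC1 : 0 < C1) (hCsc : 0 < Csc)
    (hR1 : 0 ≤ R1) (hGsc : 0 ≤ Gsc)
    (x1 x2 x3 x5 u1 u2 : ℝ → ℝ)
    (hd1 : ∀ t, 0 ≤ t → DifferentiableAt ℝ x1 t)
    (hd2 : ∀ t, 0 ≤ t → DifferentiableAt ℝ x2 t)
    (hd5 : ∀ t, 0 ≤ t → DifferentiableAt ℝ x5 t)
    (hint : ∀ T, 0 ≤ T →
      IntervalIntegrable (fun t => x3 t * u2 t * x2 t) volume 0 T)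
    (h1 : ∀ t, 0 ≤ t → L1 * deriv x1 t = -R1 * x1 t + x5 t - x2 t * u1 t)
    (h2 : ∀ t, 0 ≤ t → C1 * deriv x2 t = -G * x2 t + x1 t * u1 t - x3 t * u2 t)
    (h5 : ∀ t, 0 ≤ t → Csc * deriv x5 t = -Gsc * x5 t - x1 t) :
    ∀ T, 0 ≤ T →
      (∫ t in (0 : ℝ)..T, x2 t * (-(x3 t * u2 t)))
        ≥ G * (∫ t in (0 : ℝ)..T, (x2 t) ^ 2)
          - (1 / 2) * (L1 * (x1 0) ^ 2 + C1 * (x2 0) ^ 2 + Csc * (x5 0) ^ 2) := by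
  intro T hT
  have hV : ∀ t, 0 ≤ t → HasDerivAt (storage L1 C1 Csc x1 x2 x5)
      (x1 t * (L1 * deriv x1 t) + x2 t * (C1 * deriv x2 t) + x5 t * (Csc * deriv x5 t)) t :=
    fun t ht => hasDerivAt_storage L1 C1 Csc (hd1 t ht).hasDerivAt (hd2 t ht).hasDerivAt
      (hd5 t ht).hasDerivAt
  have hsupply : IntervalIntegrable (fun t => x2 t * -(x3 t * u2 t)) volume 0 T :=
    (hint T hT).neg.congr_ae (.of_forall fun t => by simp only [Pi.neg_apply]; ring)
  have hout : IntervalIntegrable (fun t => G * x2 t ^ 2) volume 0 T :=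
    ((continuousOn_of_forall_continuousAt fun t ht =>
      (hd2 t (Set.uIcc_of_le hT ▸ ht).1).continuousAt).pow 2).intervalIntegrable.const_mul G
  have hdiss := sub_le_integral_of_hasDeriv_right_of_le hT
    (fun t ht => (hV t ht.1).continuousAt.continuousWithinAt)
    (fun t ht => (hV t ht.1.le).hasDerivWithinAt)
    ((intervalIntegrable_iff_integrableOn_Icc_of_le hT).mp (hsupply.sub hout))
    (fun t ht => power_le_supply hR1 hGsc (h1 t ht.1.le) (h2 t ht.1.le) (h5 t ht.1.le))
  rw [integral_sub hsupply hout, intervalIntegral.integral_const_mul] at hdiss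
  have hVT := storage_nonneg hL1.le hC1.le hCsc.le x1 x2 x5 T
  unfold storage at hdiss hVT
  linarith

/-- Output strict passivity of the subsystem Σ2 with input `-x3·u2` and output
`x2`: for every `T ≥ 0` the supplied energy dominates `G` times the output
energy minus the initial stored co-energy. -/
theorem stmt_10
    (L1 C1 Csc R1 G Gsc : ℝ)
    (hL1 : 0 < L1) (hC1 : 0 < C1) (hCsc : 0 < Csc)
    (hR1 : 0 ≤ R1) (hG : 0 ≤ G) (hGsc : 0 ≤ Gsc)
    (x1 x2 x3 x5 u1 u2 : ℝ → ℝ)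
    (hd1 : ∀ t, 0 ≤ t → DifferentiableAt ℝ x1 t)
    (hd2 : ∀ t, 0 ≤ t → DifferentiableAt ℝ x2 t)
    (hd5 : ∀ t, 0 ≤ t → DifferentiableAt ℝ x5 t)
    (hint : ∀ T, 0 ≤ T →
      IntervalIntegrable (fun t => x3 t * u2 t * x2 t) volume 0 T)
    (h1 : ∀ t, 0 ≤ t → L1 * deriv x1 t = -R1 * x1 t + x5 t - x2 t * u1 t)
    (h2 : ∀ t, 0 ≤ t → C1 * deriv x2 t = -G * x2 t + x1 t * u1 t - x3 t * u2 t)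
    (h5 : ∀ t, 0 ≤ t → Csc * deriv x5 t = -Gsc * x5 t - x1 t) :
    ∀ T, 0 ≤ T →
      (∫ t in (0 : ℝ)..T, x2 t * (-(x3 t * u2 t)))
        ≥ G * (∫ t in (0 : ℝ)..T, (x2 t) ^ 2)
          - (1 / 2) * (L1 * (x1 0) ^ 2 + C1 * (x2 0) ^ 2 + Csc * (x5 0) ^ 2) :=
  stmt_10_general L1 C1 Csc R1 G Gsc hL1 hC1 hCsc hR1 hGsc x1 x2 x3 x5 u1 u2 hd1 hd2 hd5 hint h1 h2
    h5
end

section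
/- Let L1 > 0, R1 ≥ 0, κ4 > 0, κ5 ∈ ℝ, and x2⋆ ∈ ℝ. Let x1, x2, x5, u1 : [0,∞) → ℝ with x1 differentiable and x2 differentiable and x2(t) > 0 for all t, satisfying L1·x1'(t) = -R1·x1(t) + x5(t) - x2(t)·u1(t) together with the control law u1(t) = (1/x2(t))·[x5(t) + κ4·(x1(t) - x1ref(t)) + w(t)], where x1ref(t) := -κ5·(x2(t) - x2⋆) and w(t) := -L1·x1ref'(t) - R1·x1ref(t). Then the error x̃1(t) := x1(t) - x1ref(t) satisfies L1·x̃1'(t) = -(R1 + κ4)·x̃1(t) for all t ≥ 0; consequently x̃1(t) = x̃1(0)·exp(-(R1 + κ4)·t/L1) and x̃1(t) → 0 as t → ∞. -/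
open Filter Topology

/-!
Substituting the control law into the current equation cancels `x5`, the feed-forward term `w`
and the division by `x2 > 0`, leaving the scalar linear equation `L1·x̃1' = -(R1 + κ4)·x̃1`.
Its solutions on `[0, ∞)` are `x̃1(0)·exp(-(R1 + κ4)·t/L1)`, because `x̃1(t)·exp((R1 + κ4)·t/L1)`
has zero derivative; the rate is negative, so the error decays to zero.
-/

theorem closedLoop_error_eq {L R κ x1 x2 x5 u r dx1 dr : ℝ} (hx2 : x2 ≠ 0)
    (hode : L * dx1 = -R * x1 + x5 - x2 * u)
    (hu : u = (1 / x2) * (x5 + κ * (x1 - r) + (-L * dr - R * r))) :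
    L * (dx1 - dr) = -(R + κ) * (x1 - r) := by
  have hx2u : x2 * u = x5 + κ * (x1 - r) + (-L * dr - R * r) := by
    rw [hu]; field_simp
  linear_combination hode - hx2u

theorem eq_mul_exp_of_hasDerivAt_mul {f : ℝ → ℝ} {c : ℝ}
    (hf : ∀ t, 0 ≤ t → HasDerivAt f (c * f t) t) (t : ℝ) (ht : 0 ≤ t) :
    f t = f 0 * Real.exp (c * t) := by
  set g : ℝ → ℝ := fun s => f s * Real.exp (-c * s)
  have hg : ∀ s, 0 ≤ s → HasDerivAt g 0 s := by
    intro s hs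
    have hexp : HasDerivAt (fun u => Real.exp (-c * u)) (Real.exp (-c * s) * -c) s := by
      simpa using ((hasDerivAt_id s).const_mul (-c)).exp
    have hzero : c * f s * Real.exp (-c * s) + f s * (Real.exp (-c * s) * -c) = 0 := by ring
    exact hzero ▸ (hf s hs).mul hexp
  have hconst : g t = g 0 :=
    constant_of_has_deriv_right_zero
      (fun s hs => (hg s hs.1).continuousAt.continuousWithinAt)
      (fun s hs => (hg s hs.1).hasDerivWithinAt) t (Set.right_mem_Icc.2 ht)
  have hcancel : Real.exp (-c * t) * Real.exp (c * t) = 1 := by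
    rw [← Real.exp_add]; simp
  simp only [g, mul_zero, Real.exp_zero, mul_one] at hconst
  rw [← hconst, mul_assoc, hcancel, mul_one]

theorem tendsto_const_mul_exp_atTop_nhds_zero {c : ℝ} (hc : c < 0) (C : ℝ) :
    Tendsto (fun t => C * Real.exp (c * t)) atTop (𝓝 0) := by
  have h := Real.tendsto_exp_atBot.comp (tendsto_id.const_mul_atTop_of_neg hc)
  simpa using h.const_mul C

/-- Under the Σ2 control law, the current error `x̃1 = x1 - x1ref` obeys
`L1·x̃1' = -(R1 + κ4)·x̃1`, hence decays exponentially to zero. -/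
theorem stmt_12
    (L1 R1 κ4 κ5 x2s : ℝ)
    (hL1 : 0 < L1) (hR1 : 0 ≤ R1) (hκ4 : 0 < κ4)
    (x1 x2 x5 u1 : ℝ → ℝ)
    (hd1 : ∀ t, 0 ≤ t → DifferentiableAt ℝ x1 t)
    (hd2 : ∀ t, 0 ≤ t → DifferentiableAt ℝ x2 t)
    (hx2pos : ∀ t, 0 ≤ t → 0 < x2 t)
    (hode1 : ∀ t, 0 ≤ t → L1 * deriv x1 t = -R1 * x1 t + x5 t - x2 t * u1 t)
    (hu1 : ∀ t, 0 ≤ t →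
      u1 t = (1 / x2 t) * (x5 t + κ4 * (x1 t - (-κ5 * (x2 t - x2s)))
        + (-L1 * deriv (fun s => -κ5 * (x2 s - x2s)) t
            - R1 * (-κ5 * (x2 t - x2s))))) :
    (∀ t, 0 ≤ t →
      L1 * deriv (fun s => x1 s - (-κ5 * (x2 s - x2s))) t
        = -(R1 + κ4) * (x1 t - (-κ5 * (x2 t - x2s)))) ∧
    (∀ t, 0 ≤ t →
      x1 t - (-κ5 * (x2 t - x2s))
        = (x1 0 - (-κ5 * (x2 0 - x2s))) * Real.exp (-(R1 + κ4) * t / L1)) ∧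
    Tendsto (fun t => x1 t - (-κ5 * (x2 t - x2s))) atTop (𝓝 0) := by
  set r : ℝ → ℝ := fun s => -κ5 * (x2 s - x2s)
  set e : ℝ → ℝ := fun s => x1 s - r s
  have hde : ∀ t, 0 ≤ t → HasDerivAt e (deriv x1 t - deriv r t) t := fun t ht =>
    (hd1 t ht).hasDerivAt.sub (((hd2 t ht).sub_const x2s).const_mul (-κ5)).hasDerivAt
  have herror : ∀ t, 0 ≤ t → L1 * deriv e t = -(R1 + κ4) * e t := fun t ht => by
    rw [(hde t ht).deriv]
    exact closedLoop_error_eq (hx2pos t ht).ne' (hode1 t ht) (hu1 t ht)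
  have hrate : ∀ t, -(R1 + κ4) * t / L1 = -(R1 + κ4) / L1 * t := fun t => by ring
  have hsol : ∀ t, 0 ≤ t → e t = e 0 * Real.exp (-(R1 + κ4) * t / L1) := by
    refine fun t ht => (hrate t).symm ▸ eq_mul_exp_of_hasDerivAt_mul (fun s hs => ?_) t ht
    have h := herror s hs
    rw [(hde s hs).deriv] at h
    convert hde s hs using 1
    field_simp
    linarith
  refine ⟨herror, hsol, ?_⟩
  have hneg : -(R1 + κ4) / L1 < 0 := div_neg_of_neg_of_pos (by linarith) hL1
  refine (tendsto_const_mul_exp_atTop_nhds_zero hneg (e 0)).congr' ?_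
  filter_upwards [eventually_ge_atTop 0] with t ht
  rw [hsol t ht, hrate]
end

section
/- Let L1, C1 > 0, R1, G ≥ 0, κ4 > 0, κ5 ∈ ℝ, and x2⋆ ∈ ℝ. Let x1, x2, x3, x5, u1, u2 : [0,∞) → ℝ with x2 differentiable satisfying C1·x2'(t) = -G·x2(t) + x1(t)·u1(t) - x3(t)·u2(t), and suppose x2(t) > 0 and x2(t) - (L1·κ5/C1)·x1(t) ≠ 0 for all t. Define x1ref(t) := -κ5·(x2(t) - x2⋆) and x̃1(t) := x1(t) - x1ref(t). Then u1 satisfies the implicit control law u1(t) = (1/x2(t))·[x5(t) + κ4·x̃1(t) - L1·x1ref'(t) - R1·x1ref(t)] if and only if it satisfies the explicit state-feedback formula u1(t) = (x2(t) - (L1·κ5/C1)·x1(t))^{-1}·[x5(t) - R1·x1ref(t) + κ4·x̃1(t) - (L1·κ5/C1)·(x3(t)·u2(t) + G·x2(t))]. Moreover x1ref'(t) = -(κ5/C1)·(x1(t)·u1(t) - x3(t)·u2(t) - G·x2(t)). -/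
/-!
Since `x1ref = -κ5 (x2 - x2⋆)`, its derivative is `-κ5 x2'`, and the Σ2 dynamics express `x2'`
through `u1`. Substituting this into the implicit law turns it into an equation that is affine in
`u1` with leading coefficient `x2 - (L1 κ5 / C1) x1`, which can be solved for `u1` whenever that
coefficient is nonzero.
-/

theorem deriv_const_mul_sub_const_of_mul_deriv_eq {𝕜 : Type*} [NontriviallyNormedField 𝕜]
    {f : 𝕜 → 𝕜} {c a C r t : 𝕜} (hC : C ≠ 0) (h : C * deriv f t = r) :
    deriv (fun s => c * (f s - a)) t = c / C * r := by
  simp only [deriv_const_mul_field', deriv_sub_const, ← h]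
  field_simp

theorem eq_inv_mul_add_mul_sub_iff {K : Type*} [Field K] {a m p q r u : K}
    (ha : a ≠ 0) (hb : a - m * p ≠ 0) :
    u = a⁻¹ * (q + m * (p * u - r)) ↔ u = (a - m * p)⁻¹ * (q - m * r) := by
  rw [eq_inv_mul_iff_mul_eq₀ ha, eq_inv_mul_iff_mul_eq₀ hb]
  constructor <;> intro h <;> linear_combination h

theorem stmt_16_general
    (L1 C1 R1 G κ4 κ5 x2s : ℝ)
    (hC1 : 0 < C1)
    (x1 x2 x3 x5 u1 u2 : ℝ → ℝ)
    (hode2 : ∀ t, 0 ≤ t →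
      C1 * deriv x2 t = -G * x2 t + x1 t * u1 t - x3 t * u2 t)
    (hx2pos : ∀ t, 0 ≤ t → 0 < x2 t)
    (hfac : ∀ t, 0 ≤ t → x2 t - (L1 * κ5 / C1) * x1 t ≠ 0) :
    (∀ t, 0 ≤ t →
      deriv (fun s => -κ5 * (x2 s - x2s)) t
        = -(κ5 / C1) * (x1 t * u1 t - x3 t * u2 t - G * x2 t)) ∧
    (∀ t, 0 ≤ t →
      (u1 t = (1 / x2 t) * (x5 t + κ4 * (x1 t - (-κ5 * (x2 t - x2s)))
          - L1 * deriv (fun s => -κ5 * (x2 s - x2s)) t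
          - R1 * (-κ5 * (x2 t - x2s)))
        ↔
       u1 t = (x2 t - (L1 * κ5 / C1) * x1 t)⁻¹
          * (x5 t - R1 * (-κ5 * (x2 t - x2s))
            + κ4 * (x1 t - (-κ5 * (x2 t - x2s)))
            - (L1 * κ5 / C1) * (x3 t * u2 t + G * x2 t)))) := by
  have hder : ∀ t, 0 ≤ t →
      deriv (fun s => -κ5 * (x2 s - x2s)) t
        = -(κ5 / C1) * (x1 t * u1 t - x3 t * u2 t - G * x2 t) := by
    intro t ht
    rw [deriv_const_mul_sub_const_of_mul_deriv_eq hC1.ne' (hode2 t ht)]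
    ring
  refine ⟨hder, fun t ht => ?_⟩
  rw [hder t ht, one_div]
  convert eq_inv_mul_add_mul_sub_iff (hx2pos t ht).ne' (hfac t ht) using 3
  ring

/-- Corollary 1: equivalence between the implicit Σ2 control law (involving the
derivative of `x1ref`) and its implementable explicit state-feedback
realization; moreover `x1ref' = -(κ5/C1)·(x1·u1 - x3·u2 - G·x2)`. -/
theorem stmt_16
    (L1 C1 R1 G κ4 κ5 x2s : ℝ)
    (hL1 : 0 < L1) (hC1 : 0 < C1) (hR1 : 0 ≤ R1) (hG : 0 ≤ G) (hκ4 : 0 < κ4)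
    (x1 x2 x3 x5 u1 u2 : ℝ → ℝ)
    (hd2 : ∀ t, 0 ≤ t → DifferentiableAt ℝ x2 t)
    (hode2 : ∀ t, 0 ≤ t →
      C1 * deriv x2 t = -G * x2 t + x1 t * u1 t - x3 t * u2 t)
    (hx2pos : ∀ t, 0 ≤ t → 0 < x2 t)
    (hfac : ∀ t, 0 ≤ t → x2 t - (L1 * κ5 / C1) * x1 t ≠ 0) :
    (∀ t, 0 ≤ t →
      deriv (fun s => -κ5 * (x2 s - x2s)) t
        = -(κ5 / C1) * (x1 t * u1 t - x3 t * u2 t - G * x2 t)) ∧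
    (∀ t, 0 ≤ t →
      (u1 t = (1 / x2 t) * (x5 t + κ4 * (x1 t - (-κ5 * (x2 t - x2s)))
          - L1 * deriv (fun s => -κ5 * (x2 s - x2s)) t
          - R1 * (-κ5 * (x2 t - x2s)))
        ↔
       u1 t = (x2 t - (L1 * κ5 / C1) * x1 t)⁻¹
          * (x5 t - R1 * (-κ5 * (x2 t - x2s))
            + κ4 * (x1 t - (-κ5 * (x2 t - x2s)))
            - (L1 * κ5 / C1) * (x3 t * u2 t + G * x2 t)))) :=
  stmt_16_general L1 C1 R1 G κ4 κ5 x2s hC1 x1 x2 x3 x5 u1 u2 hode2 hx2pos hfac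
end
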